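/- Let $\sigma \in (1,2)$ and let $Q(w) = \frac{1}{\sigma-1} w^{\sigma-2} - \int_0^w (z+1)^{-\sigma}(w-z)^{\sigma-2}\,dz$ for $w > 0$. Then $Q(w) > 0$ for every $w > 0$. -/

import Mathlib

/-!
The integral has the closed form `w ^ (σ - 1) / ((σ - 1) * (w + 1))`: up to the factor
`-(σ - 1) * (w + 1)`, the integrand is the derivative of `(z + 1) ^ (1 - σ) * (w - z) ^ (σ - 1)`,
which equals `w ^ (σ - 1)` at `z = 0` and vanishes at `z = w`. Hence
`Q(w) = w ^ (σ - 2) / (σ - 1) * (1 - w / (w + 1)) = w ^ (σ - 2) / ((σ - 1) * (w + 1)) > 0`.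
-/

open MeasureTheory Set intervalIntegral

lemma intervalIntegrable_add_one_rpow_mul_sub_rpow {a b w : ℝ} (hb : -1 < b) (hw : 0 ≤ w) :
    IntervalIntegrable (fun z => (z + 1) ^ a * (w - z) ^ b) volume 0 w := by
  have hsub : IntervalIntegrable (fun z : ℝ => (w - z) ^ b) volume 0 w := by
    simpa using ((intervalIntegrable_rpow' (a := 0) (b := w) hb).comp_sub_left w).symm
  refine hsub.continuousOn_mul (ContinuousOn.rpow_const (by fun_prop) fun z hz => Or.inl ?_)
  rw [uIcc_of_le hw] at hz
  linarith [hz.1]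

lemma hasDerivAt_add_one_rpow_mul_sub_rpow {σ w z : ℝ} (hz₀ : -1 < z) (hzw : z < w) :
    HasDerivAt (fun z => (z + 1) ^ (1 - σ) * (w - z) ^ (σ - 1))
      (-((σ - 1) * (w + 1)) * ((z + 1) ^ (-σ) * (w - z) ^ (σ - 2))) z := by
  have hz1 : 0 < z + 1 := by linarith
  have hwz : 0 < w - z := by linarith
  have hleft : HasDerivAt (fun z : ℝ => (z + 1) ^ (1 - σ)) ((1 - σ) * (z + 1) ^ (-σ)) z := by
    simpa using ((hasDerivAt_id z).add_const 1).rpow_const (p := 1 - σ) (Or.inl hz1.ne')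
  have hright : HasDerivAt (fun z : ℝ => (w - z) ^ (σ - 1)) (-(σ - 1) * (w - z) ^ (σ - 2)) z := by
    have := ((hasDerivAt_id' z).const_sub w).rpow_const (p := σ - 1) (Or.inl hwz.ne')
    convert this using 1
    rw [show σ - 1 - 1 = σ - 2 by ring]
    ring
  have hsplit_left : (z + 1) ^ (1 - σ) = (z + 1) * (z + 1) ^ (-σ) := by
    rw [show 1 - σ = 1 + -σ by ring, Real.rpow_add hz1, Real.rpow_one]
  have hsplit_right : (w - z) ^ (σ - 1) = (w - z) * (w - z) ^ (σ - 2) := by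
    rw [show σ - 1 = 1 + (σ - 2) by ring, Real.rpow_add hwz, Real.rpow_one]
  refine (hleft.mul hright).congr_deriv ?_
  rw [hsplit_left, hsplit_right]
  ring

lemma integral_add_one_rpow_neg_mul_sub_rpow {σ w : ℝ} (hσ : 1 < σ) (hw : 0 ≤ w) :
    ∫ z in (0:ℝ)..w, (z + 1) ^ (-σ) * (w - z) ^ (σ - 2)
      = w ^ (σ - 1) / ((σ - 1) * (w + 1)) := by
  have hc : (σ - 1) * (w + 1) ≠ 0 := by positivity
  have hcont : ContinuousOn (fun z : ℝ => (z + 1) ^ (1 - σ) * (w - z) ^ (σ - 1)) (Icc 0 w) := by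
    refine ContinuousOn.mul (ContinuousOn.rpow_const (by fun_prop) fun z hz => Or.inl ?_)
      (ContinuousOn.rpow_const (by fun_prop) fun _ _ => Or.inr (by linarith))
    linarith [hz.1]
  have hFTC := integral_eq_sub_of_hasDerivAt_of_le hw hcont
    (fun z hz => hasDerivAt_add_one_rpow_mul_sub_rpow (by linarith [hz.1]) hz.2)
    ((intervalIntegrable_add_one_rpow_mul_sub_rpow (by linarith) hw).const_mul _)
  rw [intervalIntegral.integral_const_mul, sub_self, Real.zero_rpow (by linarith), zero_add,
    Real.one_rpow, sub_zero, mul_zero, one_mul, zero_sub] at hFTC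
  rw [eq_div_iff hc]
  linarith

theorem stmt2 (σ : ℝ) (hσ : σ ∈ Ioo (1:ℝ) 2) (w : ℝ) (hw : 0 < w) :
    0 < (1 / (σ - 1)) * w ^ (σ - 2)
        - ∫ z in (0:ℝ)..w, (z + 1) ^ (-σ) * (w - z) ^ (σ - 2) := by
  have hσ₁ : 1 < σ := hσ.1
  have hpow : w ^ (σ - 1) = w ^ (σ - 2) * w := by
    rw [← Real.rpow_add_one hw.ne']
    ring_nf
  have hQ : (1 / (σ - 1)) * w ^ (σ - 2) - w ^ (σ - 1) / ((σ - 1) * (w + 1))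
      = w ^ (σ - 2) / ((σ - 1) * (w + 1)) := by
    have : σ - 1 ≠ 0 := by linarith
    rw [hpow]
    field_simp
    ring
  rw [integral_add_one_rpow_neg_mul_sub_rpow hσ₁ hw.le, hQ]
  have : 0 < σ - 1 := by linarith
  positivity
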